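/- Let A be an n×n nonnegative real matrix that is strongly connected (irreducible) with ρ(A) ≥ 1. Then there exists a vector u with all components strictly positive such that A·u ≥ u componentwise. -/

import Mathlib

/-!
The spectrum of `A` is finite, so `ρ(A) ≥ 1` gives an eigenvalue `μ` with `‖μ‖ ≥ 1`; let `v` be an
eigenvector. The triangle inequality applied to `A v = μ v` shows that `x = |v|` is a nonzero
nonnegative vector with `x ≤ ‖μ‖ x ≤ A x`. Subinvariant vectors (`x ≤ A x`) are mapped to
subinvariant vectors by the monotone map `A` and are closed under sums, so `u = ∑_{k < N} A^k x` is
subinvariant; by irreducibility it is strictly positive as soon as `N` exceeds the lengths of paths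
from every index to one where `x` is positive.
-/

open Matrix Finset

lemma spectrum.exists_le_nnnorm_of_le_spectralRadius {𝕜 A : Type*} [NormedField 𝕜] [Ring A]
    [Algebra 𝕜 A] {a : A} (hfin : (spectrum 𝕜 a).Finite) {r : ENNReal} (hr : r ≠ 0)
    (h : r ≤ spectralRadius 𝕜 a) : ∃ μ ∈ spectrum 𝕜 a, r ≤ ‖μ‖₊ := by
  by_contra! hlt
  have : spectralRadius 𝕜 a < r := by
    rw [spectralRadius, ← hfin.coe_toFinset]
    simp only [Finset.mem_coe, ← Finset.sup_eq_iSup]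
    exact (Finset.sup_lt_iff (bot_lt_iff_ne_bot.2 hr)).2 fun μ hμ => hlt μ (hfin.mem_toFinset.1 hμ)
  exact (h.trans_lt this).false

namespace Matrix

lemma exists_mulVec_eq_smul_of_mem_spectrum {ι K : Type*} [Fintype ι] [DecidableEq ι] [Field K]
    {B : Matrix ι ι K} {μ : K} (hμ : μ ∈ spectrum K B) : ∃ v, v ≠ 0 ∧ B *ᵥ v = μ • v := by
  rw [← spectrum_toLin', ← Module.End.hasEigenvalue_iff_mem_spectrum] at hμ
  obtain ⟨v, hv⟩ := hμ.exists_hasEigenvector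
  exact ⟨v, hv.2, by simpa using hv.apply_eq_smul⟩

section Nonneg

variable {m n : Type*} [Fintype n]

lemma norm_map_ofReal_mulVec_le {A : Matrix m n ℝ} (hA : ∀ i j, 0 ≤ A i j) (v : n → ℂ) (i : m) :
    ‖(A.map Complex.ofReal *ᵥ v) i‖ ≤ (A *ᵥ fun j => ‖v j‖) i := by
  refine (norm_sum_le _ _).trans_eq (sum_congr rfl fun j _ => ?_)
  simp [Complex.norm_real, abs_of_nonneg (hA i j)]

variable {α : Type*} [Semiring α] [PartialOrder α] [IsOrderedRing α]

lemma mulVec_mono_of_nonneg {A : Matrix m n α} (hA : ∀ i j, 0 ≤ A i j) {x y : n → α}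
    (h : x ≤ y) : A *ᵥ x ≤ A *ᵥ y :=
  fun i => sum_le_sum fun j _ => mul_le_mul_of_nonneg_left (h j) (hA i j)

lemma apply_mul_le_mulVec_apply {A : Matrix m n α} (hA : ∀ i j, 0 ≤ A i j) {x : n → α}
    (hx : 0 ≤ x) (i : m) (j : n) : A i j * x j ≤ (A *ᵥ x) i :=
  single_le_sum (f := fun j => A i j * x j) (fun l _ => mul_nonneg (hA i l) (hx l))
    (mem_univ j)

variable [DecidableEq n] {A : Matrix n n α} {x : n → α}

lemma pow_mulVec_le_mulVec_pow_mulVec (hA : ∀ i j, 0 ≤ A i j) (hx : x ≤ A *ᵥ x) (k : ℕ) :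
    A ^ k *ᵥ x ≤ A *ᵥ (A ^ k *ᵥ x) := by
  rw [mulVec_mulVec, ← pow_succ', pow_succ, ← mulVec_mulVec]
  exact mulVec_mono_of_nonneg (pow_apply_nonneg hA k) hx

lemma sum_pow_mulVec_le_mulVec (hA : ∀ i j, 0 ≤ A i j) (hx : x ≤ A *ᵥ x) (s : Finset ℕ) :
    ∑ k ∈ s, A ^ k *ᵥ x ≤ A *ᵥ ∑ k ∈ s, A ^ k *ᵥ x := by
  rw [mulVec_sum]
  exact sum_le_sum fun k _ => pow_mulVec_le_mulVec_pow_mulVec hA hx k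

lemma exists_sum_pow_mulVec_pos [IsOrderedCancelAddMonoid α] [PosMulStrictMono α]
    (hA : ∀ i j, 0 ≤ A i j) (hx : 0 ≤ x) {j : n} (hxj : 0 < x j)
    (hreach : ∀ i, ∃ k, 0 < (A ^ k) i j) : ∃ N, ∀ i, 0 < (∑ k ∈ range N, A ^ k *ᵥ x) i := by
  choose k hk using hreach
  refine ⟨univ.sup k + 1, fun i => ?_⟩
  have hnonneg (l : ℕ) : 0 ≤ A ^ l *ᵥ x := by
    simpa using mulVec_mono_of_nonneg (pow_apply_nonneg hA l) hx
  have hterm : 0 < (A ^ k i *ᵥ x) i :=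
    (mul_pos (hk i) hxj).trans_le (apply_mul_le_mulVec_apply (pow_apply_nonneg hA _) hx i j)
  rw [Finset.sum_apply]
  exact sum_pos' (fun l _ => hnonneg l i)
    ⟨k i, mem_range.2 (Nat.lt_succ_of_le (le_sup (mem_univ i))), hterm⟩

end Nonneg

lemma exists_nonneg_ne_zero_le_mulVec {n : Type*} [Fintype n] [DecidableEq n]
    {A : Matrix n n ℝ} (hA : ∀ i j, 0 ≤ A i j)
    (hρ : 1 ≤ spectralRadius ℂ (A.map Complex.ofReal)) :
    ∃ x : n → ℝ, 0 ≤ x ∧ x ≠ 0 ∧ x ≤ A *ᵥ x := by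
  obtain ⟨μ, hμ, hμ1⟩ := spectrum.exists_le_nnnorm_of_le_spectralRadius
    (Matrix.finite_spectrum _) one_ne_zero hρ
  obtain ⟨v, hv0, hv⟩ := exists_mulVec_eq_smul_of_mem_spectrum hμ
  have hμ1 : 1 ≤ ‖μ‖ := by exact_mod_cast hμ1
  refine ⟨fun j => ‖v j‖, fun j => norm_nonneg _, ?_, fun i => ?_⟩
  · simpa [funext_iff, Function.ne_iff] using hv0
  calc ‖v i‖ ≤ ‖μ‖ * ‖v i‖ := le_mul_of_one_le_left (norm_nonneg _) hμ1
    _ = ‖(A.map Complex.ofReal *ᵥ v) i‖ := by simp [hv]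
    _ ≤ (A *ᵥ fun j => ‖v j‖) i := norm_map_ofReal_mulVec_le hA v i

end Matrix

/-- If a nonnegative square real matrix `A` is strongly connected (irreducible) and its
spectral radius satisfies `ρ(A) ≥ 1`, then there is a strictly positive vector `u` with
`A u ≥ u` componentwise. -/
theorem stmt9 {n : ℕ} (A : Matrix (Fin n) (Fin n) ℝ) (hA : ∀ i j, 0 ≤ A i j)
    (hconn : ∀ i j, ∃ k, 1 ≤ k ∧ 0 < (A ^ k) i j)
    (hρ : 1 ≤ spectralRadius ℂ (A.map Complex.ofReal)) :
    ∃ u : Fin n → ℝ, (∀ i, 0 < u i) ∧ ∀ i, u i ≤ A.mulVec u i := by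
  obtain ⟨x, hx0, hx, hsub⟩ := exists_nonneg_ne_zero_le_mulVec hA hρ
  obtain ⟨j, hj⟩ : ∃ j, 0 < x j := by
    obtain ⟨j, hj⟩ := Function.ne_iff.1 hx
    exact ⟨j, (hx0 j).lt_of_ne' hj⟩
  obtain ⟨N, hpos⟩ :=
    exists_sum_pow_mulVec_pos hA hx0 hj fun i => (hconn i j).imp fun _ => And.right
  exact ⟨_, hpos, sum_pow_mulVec_le_mulVec hA hsub _⟩
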